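/- arXiv:2310.08144 — 2 statements merged into one kernel-verified Lean document; each statement's English description precedes it below -/
import Mathlib

section
/- For every natural number x ≥ 1 and every natural number z ≥ 2, the number S of integers n with 1 ≤ n ≤ x divisible by no prime p < z satisfies |S − x·∏_{p prime, p < z}(1 − 1/p)| ≤ 2^{π(z)}, where π(z) is the number of primes ≤ z (equivalently, the number of divisors of P(z) bounds the total fractional-part error). -/
/-!
For a finite set `s` of primes, expanding `∏_{p ∈ s} (1 - 𝟙[p ∣ n])` over subsets `t ⊆ s`
and summing over `n ≤ x` gives Legendre's identity `S = ∑_{t ⊆ s} (-1)^|t| ⌊x / ∏ t⌋`,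
while the same expansion of `∏_{p ∈ s} (1 - 1/p)` gives the main term
`x ∏ (1 - 1/p) = ∑_{t ⊆ s} (-1)^|t| x / ∏ t`. The two sums differ termwise by a fractional
part, which is at most `1`, and there are `2^|s|` terms.
-/

open Finset
open scoped Classical

lemma Finset.prod_dvd_iff_of_prime {s : Finset ℕ} (hs : ∀ p ∈ s, p.Prime) {n : ℕ} :
    ∏ p ∈ s, p ∣ n ↔ ∀ p ∈ s, p ∣ n :=
  ⟨fun h _ hp => (dvd_prod_of_mem _ hp).trans h,
    prod_primes_dvd n fun p hp => (hs p hp).prime⟩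

lemma Nat.card_filter_Icc_dvd (x d : ℕ) : #{n ∈ Icc 1 x | d ∣ n} = x / d :=
  Nat.Ioc_filter_dvd_card_eq_div x d

section Sieve

variable {R : Type*} [CommRing R] {s : Finset ℕ}

lemma ite_forall_not_dvd_eq_sum_powerset (hs : ∀ p ∈ s, p.Prime) (n : ℕ) :
    (if ∀ p ∈ s, ¬ p ∣ n then 1 else 0 : R) =
      ∑ t ∈ s.powerset, (-1) ^ #t * if ∏ p ∈ t, p ∣ n then 1 else 0 := by
  calc (if ∀ p ∈ s, ¬ p ∣ n then 1 else 0 : R)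
      = ∏ p ∈ s, (1 - if p ∣ n then 1 else 0) := by
        rw [← prod_boole]
        exact prod_congr rfl fun p _ => by split_ifs <;> simp
    _ = ∑ t ∈ s.powerset, (-1) ^ #t * ∏ p ∈ t, if p ∣ n then 1 else 0 := by
        simp [prod_sub]
    _ = _ := by
        refine sum_congr rfl fun t ht => ?_
        simp only [prod_boole, prod_dvd_iff_of_prime fun p hp => hs p (mem_powerset.1 ht hp)]

theorem card_filter_not_dvd_eq_sum_powerset (hs : ∀ p ∈ s, p.Prime) (x : ℕ) :
    (#{n ∈ Icc 1 x | ∀ p ∈ s, ¬ p ∣ n} : R) =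
      ∑ t ∈ s.powerset, (-1) ^ #t * ((x / ∏ p ∈ t, p : ℕ) : R) := by
  calc (#{n ∈ Icc 1 x | ∀ p ∈ s, ¬ p ∣ n} : R)
      = ∑ n ∈ Icc 1 x, if ∀ p ∈ s, ¬ p ∣ n then 1 else 0 := by
        rw [card_filter]; push_cast; rfl
    _ = ∑ t ∈ s.powerset, (-1) ^ #t * ∑ n ∈ Icc 1 x, if ∏ p ∈ t, p ∣ n then 1 else 0 := by
        simp only [ite_forall_not_dvd_eq_sum_powerset (R := R) hs, mul_sum]; exact sum_comm
    _ = _ := by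
        refine sum_congr rfl fun t _ => ?_
        rw [← Nat.card_filter_Icc_dvd, card_filter]; push_cast; rfl

end Sieve

lemma abs_natCast_div_sub_div_le_one {K : Type*} [Field K] [LinearOrder K]
    [IsStrictOrderedRing K] [FloorSemiring K] (x d : ℕ) : |((x / d : ℕ) : K) - x / d| ≤ 1 := by
  rw [← Nat.floor_div_eq_div (K := K), abs_sub_le_iff]
  have := Nat.sub_one_lt_floor ((x : K) / d)
  have := Nat.floor_le (by positivity : (0 : K) ≤ x / d)
  constructor <;> linarith

lemma prod_one_sub_one_div_eq_sum_powerset {K : Type*} [Field K] (s : Finset ℕ) :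
    ∏ p ∈ s, (1 - 1 / (p : K)) = ∑ t ∈ s.powerset, (-1) ^ #t / ((∏ p ∈ t, p : ℕ) : K) := by
  rw [prod_sub]
  refine sum_congr rfl fun t _ => ?_
  simp [div_eq_mul_inv, prod_inv_distrib]

theorem abs_card_filter_not_dvd_sub_mul_prod_le {s : Finset ℕ} (hs : ∀ p ∈ s, p.Prime) (x : ℕ) :
    |(#{n ∈ Icc 1 x | ∀ p ∈ s, ¬ p ∣ n} : ℝ) - x * ∏ p ∈ s, (1 - 1 / (p : ℝ))| ≤ 2 ^ #s := by
  rw [card_filter_not_dvd_eq_sum_powerset hs, prod_one_sub_one_div_eq_sum_powerset, mul_sum,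
    ← sum_sub_distrib]
  calc _ ≤ ∑ t ∈ s.powerset, (1 : ℝ) := by
        refine (abs_sum_le_sum_abs _ _).trans (sum_le_sum fun t _ => ?_)
        rw [mul_div_left_comm, ← mul_sub, abs_mul, abs_pow, abs_neg, abs_one, one_pow, one_mul]
        exact abs_natCast_div_sub_div_le_one _ _
    _ = 2 ^ #s := by simp

theorem eratosthenes_error_bound_general (x z : ℕ) :
    |((((Finset.Icc 1 x).filter
          (fun n => ∀ p : ℕ, p.Prime → p < z → ¬ p ∣ n)).card : ℝ)
        - (x : ℝ) * ∏ p ∈ (Finset.range z).filter Nat.Prime, (1 - 1 / (p : ℝ)))|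
      ≤ 2 ^ (Nat.primeCounting z) := by
  have hfilter : (Icc 1 x).filter (fun n => ∀ p : ℕ, p.Prime → p < z → ¬ p ∣ n) =
      {n ∈ Icc 1 x | ∀ p ∈ z.primesBelow, ¬ p ∣ n} :=
    filter_congr fun n _ => by
      simp only [Nat.mem_primesBelow, and_imp]
      exact forall_congr' fun p => Imp.swap
  have hcard : #z.primesBelow ≤ Nat.primeCounting z :=
    (Nat.primesBelow_card_eq_primeCounting' z).trans_le (Nat.monotone_primeCounting' z.le_succ)
  rw [hfilter]
  exact (abs_card_filter_not_dvd_sub_mul_prod_le (fun _ => Nat.prime_of_mem_primesBelow) x).trans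
    (pow_le_pow_right₀ one_le_two hcard)

/-- Classical sieve of Eratosthenes error estimate with explicit constant:
`|S − x ∏_{p<z} (1 − 1/p)| ≤ 2^{π(z)}`. -/
theorem eratosthenes_error_bound (x z : ℕ) (hx : 1 ≤ x) (hz : 2 ≤ z) :
    |((((Finset.Icc 1 x).filter
          (fun n => ∀ p : ℕ, p.Prime → p < z → ¬ p ∣ n)).card : ℝ)
        - (x : ℝ) * ∏ p ∈ (Finset.range z).filter Nat.Prime, (1 - 1 / (p : ℝ)))|
      ≤ 2 ^ (Nat.primeCounting z) :=
  eratosthenes_error_bound_general x z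
end

section
/- For every positive integer x and every natural number z ≥ 2, the number S of integers n with 1 ≤ n ≤ x divisible by no prime p < z satisfies S = x·∏_{p prime, p < z}(1 − 1/p) + ∑_{p prime, p < z} ∑_{d ∣ Q(p)} μ(d)·{x/(d·p)}, where Q(p) = ∏_{q prime, q < p} q, μ is the Möbius function, and {y} = y − ⌊y⌋ denotes the fractional part. -/
/-!
Removing from the numbers up to `x` without prime factor `< p` those divisible by the prime `p`
(the numbers of least prime factor `p`, i.e. `p` times a number up to `x / p` without prime factor
`< p`) gives Buchstab's recursion `S(x, p + 1) = S(x, p) - S(x / p, p)`. Legendre's inclusion–exclusion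
`S(N, p) = ∑_{d ∣ Q(p)} μ(d) ⌊N / d⌋`, together with `⌊x / (d p)⌋ = x / (d p) - {x / (d p)}` and
the Euler product `∑_{d ∣ Q(p)} μ(d) / d = ∏_{q < p} (1 - 1 / q)`, evaluates `S(x / p, p)` exactly.
Summing the recursion by induction on `z`, the main terms telescope to `x ∏_{p < z} (1 - 1 / p)`.
-/

open Finset ArithmeticFunction
open scoped Classical ArithmeticFunction.Moebius ArithmeticFunction.zeta

lemma natCast_div_eq_sub_fract {K : Type*} [Field K] [LinearOrder K] [IsStrictOrderedRing K]
    [FloorRing K] (m n : ℕ) : ((m / n : ℕ) : K) = m / n - Int.fract ((m : K) / n) := by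
  rw [Int.self_sub_fract, ← natCast_floor_eq_intCast_floor (by positivity), Nat.floor_div_eq_div]

lemma sum_moebius_divisors (n : ℕ) : ∑ d ∈ n.divisors, μ d = if n = 1 then 1 else 0 := by
  rw [← coe_zeta_mul_apply, coe_zeta_mul_moebius, one_apply]

theorem card_filter_coprime_Icc_eq_sum_moebius (N : ℕ) {m : ℕ} (hm : m ≠ 0) :
    (#{n ∈ Icc 1 N | n.Coprime m} : ℤ) = ∑ d ∈ m.divisors, μ d * (N / d : ℕ) := by
  calc (#{n ∈ Icc 1 N | n.Coprime m} : ℤ)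
      = ∑ n ∈ Icc 1 N, ∑ d ∈ (n.gcd m).divisors, μ d := by
        simp [Nat.Coprime, sum_moebius_divisors]
    _ = ∑ n ∈ Icc 1 N, ∑ d ∈ m.divisors, if d ∣ n then μ d else 0 := by
        refine sum_congr rfl fun n _ => ?_
        rw [← sum_filter]
        congr 1
        ext d
        simp only [Nat.mem_divisors, Nat.dvd_gcd_iff, ne_eq, Nat.gcd_eq_zero_iff, hm, and_false,
          not_false_eq_true, and_true, mem_filter]
        exact and_comm
    _ = ∑ d ∈ m.divisors, μ d * #{n ∈ Icc 1 N | d ∣ n} := by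
        rw [sum_comm]
        refine sum_congr rfl fun d _ => ?_
        rw [← sum_filter, sum_const, nsmul_eq_mul, mul_comm]
    _ = ∑ d ∈ m.divisors, μ d * (N / d : ℕ) := by
        simp only [← Nat.Ioc_filter_dvd_card_eq_div]
        rfl

lemma sum_moebius_mul_one_div_eq_prod {n : ℕ} (hn : Squarefree n) :
    ∑ d ∈ n.divisors, (μ d : ℝ) * (1 / d) = ∏ p ∈ n.primeFactors, (1 - 1 / (p : ℝ)) := by
  set inv : ArithmeticFunction ℝ := pdiv ζ ArithmeticFunction.id
  have inv_apply (d : ℕ) : inv d = 1 / d := by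
    rcases eq_or_ne d 0 with rfl | hd <;> simp [inv, pdiv_apply, *]
  have hinv : inv.IsMultiplicative := isMultiplicative_zeta.natCast.pdiv isMultiplicative_id.natCast
  simpa only [inv_apply] using (hinv.prodPrimeFactors_one_sub_of_squarefree _ hn).symm

lemma coprime_prod_primesBelow_iff {n z : ℕ} :
    n.Coprime (∏ p ∈ z.primesBelow, p) ↔ ∀ p : ℕ, p.Prime → p < z → ¬ p ∣ n := by
  simp only [Nat.coprime_prod_right_iff, Nat.mem_primesBelow, and_imp]
  exact forall_congr' fun p =>
    ⟨fun h hp hpz => (Nat.coprime_comm.trans hp.coprime_iff_not_dvd).mp (h hpz hp),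
      fun h hpz hp => (Nat.coprime_comm.trans hp.coprime_iff_not_dvd).mpr (h hp hpz)⟩

lemma prod_primesBelow_eq_primorial (z : ℕ) : ∏ p ∈ z.primesBelow, p = primorial (z - 1) := by
  rw [Nat.primesBelow_eq_primesLE_sub_one]
  rfl

lemma primesBelow_succ_of_prime {p : ℕ} (hp : p.Prime) :
    (p + 1).primesBelow = insert p p.primesBelow := by
  rw [Nat.primesBelow_eq_filter_range, range_add_one, filter_insert, if_pos hp]
  rfl

lemma primesBelow_succ_of_not_prime {z : ℕ} (hz : ¬ z.Prime) :
    (z + 1).primesBelow = z.primesBelow := by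
  rw [Nat.primesBelow_eq_filter_range, range_add_one, filter_insert, if_neg hz]
  rfl

noncomputable def sifted (x z : ℕ) : Finset ℕ :=
  {n ∈ Icc 1 x | ∀ p : ℕ, p.Prime → p < z → ¬ p ∣ n}

theorem card_sifted_eq_sum_moebius (N z : ℕ) :
    (#(sifted N z) : ℤ) = ∑ d ∈ (∏ p ∈ z.primesBelow, p).divisors, μ d * (N / d : ℕ) := by
  rw [← card_filter_coprime_Icc_eq_sum_moebius N
    (prod_primesBelow_eq_primorial z ▸ primorial_ne_zero _)]
  simp only [sifted, coprime_prod_primesBelow_iff]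

theorem card_sifted_div_eq (x q z : ℕ) :
    (#(sifted (x / q) z) : ℝ) = x / q * ∏ p ∈ z.primesBelow, (1 - 1 / (p : ℝ))
      - ∑ d ∈ (∏ p ∈ z.primesBelow, p).divisors,
          (μ d : ℝ) * Int.fract ((x : ℝ) / ((d : ℝ) * (q : ℝ))) := by
  have hEuler : ∏ p ∈ z.primesBelow, (1 - 1 / (p : ℝ))
      = ∑ d ∈ (∏ p ∈ z.primesBelow, p).divisors, (μ d : ℝ) * (1 / d) := by
    rw [sum_moebius_mul_one_div_eq_prod (prod_primesBelow_eq_primorial z ▸ squarefree_primorial _),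
      Nat.primeFactors_prod fun _ => Nat.prime_of_mem_primesBelow]
  have hLegendre := congrArg (Int.cast : ℤ → ℝ) (card_sifted_eq_sum_moebius (x / q) z)
  simp only [Int.cast_natCast, Int.cast_sum, Int.cast_mul, Nat.div_div_eq_div_mul] at hLegendre
  rw [hLegendre, hEuler, mul_sum, ← sum_sub_distrib]
  refine sum_congr rfl fun d _ => ?_
  rw [mul_comm q, natCast_div_eq_sub_fract]
  push_cast
  ring

lemma sifted_succ_of_not_prime (x : ℕ) {z : ℕ} (hz : ¬ z.Prime) :
    sifted x (z + 1) = sifted x z := by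
  ext n
  simp only [sifted, mem_filter, Nat.lt_succ_iff_lt_or_eq, or_imp, forall_and]
  exact and_congr_right fun _ => and_iff_left fun q hq hqz => absurd (hqz ▸ hq) hz

lemma sifted_succ_of_prime (x : ℕ) {p : ℕ} (hp : p.Prime) :
    sifted x (p + 1) = {n ∈ sifted x p | ¬ p ∣ n} := by
  ext n
  simp only [sifted, mem_filter, Nat.lt_succ_iff_lt_or_eq, or_imp, forall_and]
  constructor
  · rintro ⟨hn, hlt, heq⟩
    exact ⟨⟨hn, hlt⟩, heq p hp rfl⟩
  · rintro ⟨⟨hn, hlt⟩, hndvd⟩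
    exact ⟨hn, hlt, fun q _ hq => hq ▸ hndvd⟩

lemma filter_dvd_sifted_eq_map (x : ℕ) {p : ℕ} (hp : p.Prime) :
    {n ∈ sifted x p | p ∣ n}
      = (sifted (x / p) p).map ⟨(p * ·), mul_right_injective₀ hp.ne_zero⟩ := by
  ext n
  simp only [sifted, mem_filter, mem_map, mem_Icc, Function.Embedding.coeFn_mk]
  constructor
  · rintro ⟨⟨⟨h1, hx⟩, hrough⟩, m, rfl⟩
    refine ⟨m, ⟨⟨Nat.pos_of_mul_pos_left h1, ?_⟩, fun q hq hqp hqm => ?_⟩, rfl⟩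
    · exact (Nat.le_div_iff_mul_le hp.pos).mpr (mul_comm m p ▸ hx)
    · exact hrough q hq hqp (hqm.mul_left p)
  · rintro ⟨m, ⟨⟨h1, hx⟩, hrough⟩, rfl⟩
    refine ⟨⟨⟨Nat.mul_pos hp.pos h1, ?_⟩, fun q hq hqp hqm => ?_⟩, dvd_mul_right p m⟩
    · exact mul_comm m p ▸ (Nat.le_div_iff_mul_le hp.pos).mp hx
    · rcases (Nat.Prime.dvd_mul hq).mp hqm with hqp' | hqm'
      · exact hqp.ne ((Nat.prime_dvd_prime_iff_eq hq hp).mp hqp')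
      · exact hrough q hq hqp hqm'

theorem card_sifted_add_card_sifted_div (x : ℕ) {p : ℕ} (hp : p.Prime) :
    #(sifted x (p + 1)) + #(sifted (x / p) p) = #(sifted x p) := by
  rw [sifted_succ_of_prime x hp, ← card_filter_add_card_filter_not (s := sifted x p) (p := (p ∣ ·)),
    filter_dvd_sifted_eq_map x hp, card_map, add_comm]

theorem sieve_exact_identity_general (x z : ℕ) :
    ((((Finset.Icc 1 x).filter
        (fun n => ∀ p : ℕ, p.Prime → p < z → ¬ p ∣ n)).card : ℝ)) =
      (x : ℝ) * ∏ p ∈ (Finset.range z).filter Nat.Prime, (1 - 1 / (p : ℝ))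
        + ∑ p ∈ (Finset.range z).filter Nat.Prime,
            ∑ d ∈ (∏ q ∈ (Finset.range p).filter Nat.Prime, q).divisors,
              (ArithmeticFunction.moebius d : ℝ) *
                Int.fract ((x : ℝ) / ((d : ℝ) * (p : ℝ))) := by
  change (#(sifted x z) : ℝ) = x * ∏ p ∈ z.primesBelow, (1 - 1 / (p : ℝ)) + ∑ p ∈ z.primesBelow,
    ∑ d ∈ (∏ q ∈ p.primesBelow, q).divisors, (μ d : ℝ) * Int.fract ((x : ℝ) / (d * p))
  induction z with
  | zero => simp [sifted]
  | succ z ih =>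
    by_cases hz : z.Prime
    · have hz_notMem : z ∉ z.primesBelow := fun h => (Nat.lt_of_mem_primesBelow h).false
      have hBuchstab := congrArg (Nat.cast : ℕ → ℝ) (card_sifted_add_card_sifted_div x hz)
      push_cast at hBuchstab
      rw [primesBelow_succ_of_prime hz, prod_insert hz_notMem, sum_insert hz_notMem]
      linear_combination hBuchstab + ih - card_sifted_div_eq x z z
    · rw [primesBelow_succ_of_not_prime hz, sifted_succ_of_not_prime x hz, ih]

/-- Exact sieve identity with fractional parts:
`S = x ∏_{p<z} (1 − 1/p) + ∑_{p<z} ∑_{d ∣ Q(p)} μ(d) {x/(dp)}`,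
where `Q(p)` is the product of the primes `q < p` and `{y}` is the
fractional part. -/
theorem sieve_exact_identity (x z : ℕ) (hx : 0 < x) (hz : 2 ≤ z) :
    ((((Finset.Icc 1 x).filter
        (fun n => ∀ p : ℕ, p.Prime → p < z → ¬ p ∣ n)).card : ℝ)) =
      (x : ℝ) * ∏ p ∈ (Finset.range z).filter Nat.Prime, (1 - 1 / (p : ℝ))
        + ∑ p ∈ (Finset.range z).filter Nat.Prime,
            ∑ d ∈ (∏ q ∈ (Finset.range p).filter Nat.Prime, q).divisors,
              (ArithmeticFunction.moebius d : ℝ) *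
                Int.fract ((x : ℝ) / ((d : ℝ) * (p : ℝ))) :=
  sieve_exact_identity_general x z
end
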